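/- arXiv:1801.09622 — 5 statements merged into one kernel-verified Lean document; each statement's English description precedes it below -/
import Mathlib

section
/- Let E be a real inner product space, let G, χ ∈ E, and let r, d, C ∈ ℝ with r ≥ 0, C ≥ 0 and |d| ≤ C·r·‖G‖. Then (1 + C²)·r² + ‖G − χ‖² + d + ⟪χ, G⟫ ≥ r² + (1/4)·‖G‖² + (1/2)·‖χ‖². -/
open scoped RealInnerProductSpace

/-- The computational core of the coercivity proofs: for vectors `G, χ` of a
real inner product space and reals `r, d, C` with `r ≥ 0`, `C ≥ 0` and
`|d| ≤ C r ‖G‖`, one has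
`(1 + C²) r² + ‖G - χ‖² + d + ⟪χ, G⟫ ≥ r² + ¼‖G‖² + ½‖χ‖²`. -/
theorem coercivity_core
    {E : Type*} [NormedAddCommGroup E] [InnerProductSpace ℝ E]
    (G χ : E) (r d C : ℝ) (hr : 0 ≤ r) (hC : 0 ≤ C)
    (hd : |d| ≤ C * r * ‖G‖) :
    (1 + C ^ 2) * r ^ 2 + ‖G - χ‖ ^ 2 + d + ⟪χ, G⟫ ≥
      r ^ 2 + (1 / 4) * ‖G‖ ^ 2 + (1 / 2) * ‖χ‖ ^ 2 := by
  have hexp : ‖G - χ‖ ^ 2 = ‖G‖ ^ 2 - 2 * ⟪G, χ⟫ + ‖χ‖ ^ 2 := by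
    exact norm_sub_sq_real G χ
  have hcomm : ⟪χ, G⟫ = ⟪G, χ⟫ := real_inner_comm _ _
  have hcs : ⟪G, χ⟫ ≤ ‖G‖ * ‖χ‖ := real_inner_le_norm G χ
  have habs := abs_le.mp hd
  nlinarith [sq_nonneg (C * r - ‖G‖ / 2), sq_nonneg (‖G‖ - ‖χ‖)]
end

section
/- Let E be a real normed vector space, let a : E × E → ℝ be a bilinear form that is coercive with constant α > 0 (a(w,w) ≥ α‖w‖² for all w), let F : E → ℝ be a linear functional, let K_h ⊆ E be a convex set, and let u_h ∈ K_h satisfy a(u_h, v_h − u_h) ≥ F(v_h − u_h) for all v_h ∈ K_h. Then for every u ∈ E and every v_h ∈ K_h, with R(w) := a(u, w) − F(w), one has α‖u − u_h‖² ≤ a(u − u_h, u − v_h) + R(v_h − u_h). -/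
/-- Falk-type identity: if `u_h` solves the discrete variational inequality on
the convex set `K_h` for a coercive bilinear form `a`, then for any `u` and any
`v_h ∈ K_h`, with residual `R w = a u w - F w`,
`α ‖u - u_h‖² ≤ a (u - u_h, u - v_h) + R (v_h - u_h)`. -/
theorem falk_identity
    {E : Type*} [NormedAddCommGroup E] [NormedSpace ℝ E]
    (a : E →ₗ[ℝ] E →ₗ[ℝ] ℝ)
    (α : ℝ) (hα : 0 < α) (hcoer : ∀ w : E, a w w ≥ α * ‖w‖ ^ 2)
    (F : E →ₗ[ℝ] ℝ)
    (Kh : Set E) (hconv : Convex ℝ Kh)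
    (uh : E) (huh : uh ∈ Kh)
    (hVIh : ∀ vh ∈ Kh, a uh (vh - uh) ≥ F (vh - uh))
    (u : E) (vh : E) (hvh : vh ∈ Kh)
    (R : E → ℝ) (hR : ∀ w, R w = a u w - F w) :
    α * ‖u - uh‖ ^ 2 ≤ a (u - uh) (u - vh) + R (vh - uh) := by
  have h1 := hcoer (u - uh)
  have h2 := hVIh vh hvh
  have key : a (u - uh) (u - uh) =
      a (u - uh) (u - vh) + (a u (vh - uh) - a uh (vh - uh)) := by
    simp only [map_sub, LinearMap.sub_apply]
    ring
  rw [hR]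
  linarith
end

section
/- Let H be a real normed vector space, let a : H × H → ℝ be a bilinear form that is bounded with constant M ≥ 0 (|a(u,v)| ≤ M‖u‖‖v‖) and coercive with constant α > 0 (a(w,w) ≥ α‖w‖²), and let F : H → ℝ be a linear functional. Let K, K_h ⊆ H be non-empty convex sets, let u ∈ K satisfy a(u, v − u) ≥ F(v − u) for all v ∈ K, and let u_h ∈ K_h satisfy a(u_h, v_h − u_h) ≥ F(v_h − u_h) for all v_h ∈ K_h. Set R(w) := a(u, w) − F(w). Then for every v ∈ K and every v_h ∈ K_h: (α/2)·‖u − u_h‖² ≤ (M²/(2α))·‖u − v_h‖² + R(v_h − u) + R(v − u_h). -/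
/-- Abstract nonconforming a priori error bound:
`(α/2)‖u - u_h‖² ≤ (M²/(2α))‖u - v_h‖² + R(v_h - u) + R(v - u_h)`. -/
theorem apriori_nonconforming
    {H : Type*} [NormedAddCommGroup H] [NormedSpace ℝ H]
    (a : H →ₗ[ℝ] H →ₗ[ℝ] ℝ)
    (M : ℝ) (hM : 0 ≤ M) (hbdd : ∀ u v : H, |a u v| ≤ M * ‖u‖ * ‖v‖)
    (α : ℝ) (hα : 0 < α) (hcoer : ∀ w : H, a w w ≥ α * ‖w‖ ^ 2)
    (F : H →ₗ[ℝ] ℝ)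
    (K Kh : Set H) (hKne : K.Nonempty) (hKhne : Kh.Nonempty)
    (hKconv : Convex ℝ K) (hKhconv : Convex ℝ Kh)
    (u : H) (hu : u ∈ K) (hVI : ∀ v ∈ K, a u (v - u) ≥ F (v - u))
    (uh : H) (huh : uh ∈ Kh) (hVIh : ∀ vh ∈ Kh, a uh (vh - uh) ≥ F (vh - uh))
    (R : H → ℝ) (hR : ∀ w, R w = a u w - F w) :
    ∀ v ∈ K, ∀ vh ∈ Kh,
      (α / 2) * ‖u - uh‖ ^ 2 ≤
        (M ^ 2 / (2 * α)) * ‖u - vh‖ ^ 2 + R (vh - u) + R (v - uh) := by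
  intro v hv vh hvh
  have h1 := hcoer (u - uh)
  have h2 := hVIh vh hvh
  have h3 := hVI v hv
  have h4 : a (u - uh) (u - vh) ≤ M * ‖u - uh‖ * ‖u - vh‖ :=
    le_trans (le_abs_self _) (hbdd _ _)
  have h5 : M * ‖u - uh‖ * ‖u - vh‖ ≤
      (α / 2) * ‖u - uh‖ ^ 2 + (M ^ 2 / (2 * α)) * ‖u - vh‖ ^ 2 := by
    rw [div_mul_eq_mul_div, div_mul_eq_mul_div, div_add_div _ _ two_ne_zero
      (by positivity : (2 : ℝ) * α ≠ 0), le_div_iff₀ (by positivity)]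
    nlinarith [sq_nonneg (M * ‖u - vh‖ - α * ‖u - uh‖), hα.le]
  simp only [hR, map_sub, LinearMap.sub_apply] at h1 h2 h3 h4 ⊢
  nlinarith [h1, h2, h3, h4, h5]
end

section
/- Let H be a real normed vector space, let a : H × H → ℝ be a bilinear form that is bounded with constant M ≥ 0 and coercive with constant α > 0, and let F : H → ℝ be a linear functional. Let K ⊆ H be a non-empty convex set and K_h ⊆ K a non-empty convex subset, let u ∈ K satisfy a(u, v − u) ≥ F(v − u) for all v ∈ K, and let u_h ∈ K_h satisfy a(u_h, v_h − u_h) ≥ F(v_h − u_h) for all v_h ∈ K_h. Set R(w) := a(u, w) − F(w). Then for every v_h ∈ K_h: (α/2)·‖u − u_h‖² ≤ (M²/(2α))·‖u − v_h‖² + R(v_h − u). -/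
/-- Abstract conforming a priori error bound (`K_h ⊆ K`):
`(α/2)‖u - u_h‖² ≤ (M²/(2α))‖u - v_h‖² + R(v_h - u)`. -/
theorem apriori_conforming
    {H : Type*} [NormedAddCommGroup H] [NormedSpace ℝ H]
    (a : H →ₗ[ℝ] H →ₗ[ℝ] ℝ)
    (M : ℝ) (hM : 0 ≤ M) (hbdd : ∀ u v : H, |a u v| ≤ M * ‖u‖ * ‖v‖)
    (α : ℝ) (hα : 0 < α) (hcoer : ∀ w : H, a w w ≥ α * ‖w‖ ^ 2)
    (F : H →ₗ[ℝ] ℝ)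
    (K Kh : Set H) (hKne : K.Nonempty) (hKhne : Kh.Nonempty)
    (hKconv : Convex ℝ K) (hKhconv : Convex ℝ Kh) (hsub : Kh ⊆ K)
    (u : H) (hu : u ∈ K) (hVI : ∀ v ∈ K, a u (v - u) ≥ F (v - u))
    (uh : H) (huh : uh ∈ Kh) (hVIh : ∀ vh ∈ Kh, a uh (vh - uh) ≥ F (vh - uh))
    (R : H → ℝ) (hR : ∀ w, R w = a u w - F w) :
    ∀ vh ∈ Kh,
      (α / 2) * ‖u - uh‖ ^ 2 ≤ (M ^ 2 / (2 * α)) * ‖u - vh‖ ^ 2 + R (vh - u) := by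
  intro vh hvh
  have huhK : uh ∈ K := hsub huh
  have h1 := hcoer (u - uh)
  have h2 := hVIh vh hvh
  have h3 := hVI uh huhK
  have h4 : a (u - uh) (u - vh) ≤ M * ‖u - uh‖ * ‖u - vh‖ :=
    le_trans (le_abs_self _) (hbdd _ _)
  have hc : M ^ 2 / (2 * α) * (2 * α) = M ^ 2 :=
    div_mul_cancel₀ _ (by positivity)
  have hy : M * ‖u - uh‖ * ‖u - vh‖ ≤
      α / 2 * ‖u - uh‖ ^ 2 + M ^ 2 / (2 * α) * ‖u - vh‖ ^ 2 := by
    nlinarith [sq_nonneg (α * ‖u - uh‖ - M * ‖u - vh‖), hα, hc,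
      norm_nonneg (u - uh), norm_nonneg (u - vh)]
  rw [hR]
  simp only [map_sub, LinearMap.sub_apply] at *
  linarith
end

section
/- Let X be a lattice-ordered real vector space, let λ, λ_h : X → ℝ be linear functionals with λ_h positive (λ_h(x) ≥ 0 whenever x ≥ 0), and let g, u, u_h ∈ X be such that g ≤ u and λ(v − u) ≥ 0 for every v ∈ X with g ≤ v. Then (λ_h − λ)(u_h − u) ≤ λ_h((u_h − g) ⊔ 0) + (λ − λ_h)((g − u_h) ⊔ 0). -/
/-- Duality estimate at the core of the a posteriori error bound:
`(λ_h - λ)(u_h - u) ≤ λ_h((u_h - g) ⊔ 0) + (λ - λ_h)((g - u_h) ⊔ 0)`. -/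
theorem aposteriori_duality
    {X : Type*} [AddCommGroup X] [Lattice X]
    [CovariantClass X X (· + ·) (· ≤ ·)] [Module ℝ X]
    (lam lamh : X →ₗ[ℝ] ℝ)
    (hlamh : ∀ x : X, 0 ≤ x → 0 ≤ lamh x)
    (g u uh : X) (hg : g ≤ u)
    (h : ∀ v : X, g ≤ v → lam (v - u) ≥ 0) :
    (lamh - lam) (uh - u) ≤ lamh ((uh - g) ⊔ 0) + (lam - lamh) ((g - uh) ⊔ 0) := by
  have hdiff : (uh - g) ⊔ 0 - (g - uh) ⊔ 0 = uh - g := by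
    have := posPart_sub_negPart (uh - g)
    simpa [posPart_def, negPart_def, neg_sub] using this
  have hsup : (g - uh) ⊔ 0 + uh = g ⊔ uh := by
    rw [sup_add]; simp
  have h1 : 0 ≤ lamh ((uh - g) ⊔ 0 - (g - uh) ⊔ 0 - (uh - u)) := by
    apply hlamh
    rw [hdiff]
    have : uh - g - (uh - u) = u - g := by abel
    rw [this]
    simpa using hg
  have h2 : 0 ≤ lam ((g - uh) ⊔ 0 + uh - u) := by
    rw [hsup]
    exact h _ le_sup_left
  simp only [map_sub, map_add, LinearMap.sub_apply] at h1 h2 ⊢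
  linarith
end
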